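/- arXiv:1412.4572 — 2 statements merged into one kernel-verified Lean document; each statement's English description precedes it below -/
import Mathlib

section
/- Let G be a group with finite symmetric generating set S, and let B₀, B₁, B₂, B₃ be finite subsets of G each of whose induced subgraphs of Cay(G,S) is connected. If B₁ separates B₀ from B₂ and B₂ separates B₁ from B₃, then B₁ separates B₀ from B₃ and B₂ separates B₀ from B₃. -/
open scoped Pointwise

/-- The Cayley graph of a group with respect to a (symmetric) set `S`:
`g` and `g'` are adjacent when they differ by right multiplication by an element of `S`. -/
def cayley {G : Type*} [Group G] (S : Set G) : SimpleGraph G :=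
  SimpleGraph.fromRel (fun g g' => g⁻¹ * g' ∈ S)

/-- `x` and `y` are joined by a walk of `Γ` avoiding the vertex set `K`, i.e. they are in the
same connected component of the graph obtained from `Γ` by deleting the vertices of `K` and
all incident edges. -/
def ReachAvoid {V : Type*} (Γ : SimpleGraph V) (K : Set V) (x y : V) : Prop :=
  ∃ w : Γ.Walk x y, ∀ v ∈ w.support, v ∉ K

/-- `Separates S B₁ B₀ B₂` : `B₁` separates `B₀` from `B₂`, i.e. `B₀` and `B₂` lie in distinct
connected components of the graph obtained from the Cayley graph of `(G,S)` by deleting the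
vertices of `B₁` and all incident edges. -/
def Separates {G : Type*} [Group G] (S : Set G) (B₁ B₀ B₂ : Set G) : Prop :=
  Disjoint B₀ B₁ ∧ Disjoint B₂ B₁ ∧
    ∀ x ∈ B₀, ∀ y ∈ B₂, ¬ ReachAvoid (cayley S) B₁ x y

/-!
Generation makes the Cayley graph connected, so a walk from `x ∈ B₀` to a point of `B₂` exists;
its first vertex in `B₁ ∪ B₂` cannot lie in `B₂`, since `B₁` separates `B₀` from `B₂`. Hence every
point of `B₀` reaches `B₁` avoiding `B₂`, and a walk from `B₀` to `B₃` avoiding `B₂` would yield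
one from `B₁` to `B₃` avoiding `B₂`. A walk from `B₀` to `B₃` avoiding `B₁` must therefore meet
`B₂`, and its part up to that point contradicts `B₁` separating `B₀` from `B₂`.
-/

open SimpleGraph

section ReachAvoid

variable {V : Type*} {Γ : SimpleGraph V} {K K' : Set V} {x y z : V}

theorem reachAvoid_refl (hx : x ∉ K) : ReachAvoid Γ K x x :=
  ⟨Walk.nil, by simpa using hx⟩

theorem ReachAvoid.mono (h : ReachAvoid Γ K x y) (hK : K' ⊆ K) : ReachAvoid Γ K' x y :=
  let ⟨w, hw⟩ := h
  ⟨w, fun v hv hvK' => hw v hv (hK hvK')⟩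

theorem ReachAvoid.trans (hxy : ReachAvoid Γ K x y) (hyz : ReachAvoid Γ K y z) :
    ReachAvoid Γ K x z := by
  obtain ⟨w, hw⟩ := hxy
  obtain ⟨w', hw'⟩ := hyz
  refine ⟨w.append w', fun v hv => ?_⟩
  rcases (Walk.mem_support_append_iff w w').mp hv with hv | hv
  exacts [hw v hv, hw' v hv]

theorem ReachAvoid.symm (h : ReachAvoid Γ K x y) : ReachAvoid Γ K y x :=
  let ⟨w, hw⟩ := h
  ⟨w.reverse, fun v hv => hw v (by simpa using hv)⟩

theorem ReachAvoid.or_exists_mem_reachAvoid (h : ReachAvoid Γ K x y) :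
    ReachAvoid Γ K' x y ∨ ∃ z ∈ K', ReachAvoid Γ K x z := by
  classical
  obtain ⟨w, hw⟩ := h
  by_cases hmeet : ∃ z ∈ w.support, z ∈ K'
  · obtain ⟨z, hz, hzK'⟩ := hmeet
    exact Or.inr ⟨z, hzK', w.takeUntil z hz,
      fun v hv => hw v (w.support_takeUntil_subset_support hz hv)⟩
  · exact Or.inl ⟨w, fun v hv hvK' => hmeet ⟨v, hv, hvK'⟩⟩

theorem SimpleGraph.Walk.exists_mem_reachAvoid_diff_singleton (w : Γ.Walk x z) (hz : z ∈ K) :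
    ∃ y ∈ K, ReachAvoid Γ (K \ {y}) x y := by
  induction w with
  | nil => exact ⟨_, hz, reachAvoid_refl fun h => h.2 rfl⟩
  | @cons u v z hadj w ih =>
    by_cases hu : u ∈ K
    · exact ⟨u, hu, reachAvoid_refl fun h => h.2 rfl⟩
    · obtain ⟨y, hy, hreach⟩ := ih hz
      have hstep : ReachAvoid Γ (K \ {y}) u v := by
        obtain ⟨w', hw'⟩ := hreach
        refine ⟨hadj.toWalk, fun t ht htK => ?_⟩
        simp only [Adj.toWalk, Walk.support_cons, Walk.support_nil, List.mem_cons,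
          List.not_mem_nil, or_false] at ht
        rcases ht with rfl | rfl
        exacts [hu htK.1, hw' t w'.start_mem_support htK]
      exact ⟨y, hy, hstep.trans hreach⟩

end ReachAvoid

section Cayley

variable {G : Type*} [Group G] {S : Set G}

theorem cayley_reachable_mul (g : G) {s : G} (hs : s ∈ S) : (cayley S).Reachable g (g * s) := by
  by_cases h1 : s = 1
  · simp [h1]
  · refine Adj.reachable ?_
    simp only [cayley, fromRel_adj, inv_mul_cancel_left]
    exact ⟨fun h => h1 (by simpa using h.symm), Or.inl hs⟩

theorem cayley_connected_of_closure_eq_top (hgen : Subgroup.closure S = ⊤) :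
    (cayley S).Connected := by
  refine (connected_iff_exists_forall_reachable _).mpr ⟨1, fun g => ?_⟩
  induction (hgen ▸ Subgroup.mem_top g : g ∈ Subgroup.closure S)
    using Subgroup.closure_induction_right with
  | one => rfl
  | mul_right x _ s hs ih => exact ih.trans (cayley_reachable_mul x hs)
  | mul_inv_cancel x _ s hs ih =>
    exact ih.trans (by simpa using (cayley_reachable_mul (x * s⁻¹) hs).symm)

end Cayley

namespace Separates

variable {G : Type*} [Group G] {S : Set G} {B₀ B₁ B₂ B₃ : Set G}

theorem disjoint (h : Separates S B₁ B₀ B₂) : Disjoint B₀ B₂ :=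
  Set.disjoint_left.mpr fun x hx0 hx2 =>
    h.2.2 x hx0 x hx2 (reachAvoid_refl (Set.disjoint_left.mp h.1 hx0))

theorem exists_mem_reachAvoid (hconn : (cayley S).Connected) (hne : B₂.Nonempty)
    (h : Separates S B₁ B₀ B₂) {x : G} (hx : x ∈ B₀) :
    ∃ b ∈ B₁, ReachAvoid (cayley S) B₂ x b := by
  obtain ⟨z, hz⟩ := hne
  obtain ⟨y, hy, hreach⟩ := (hconn.preconnected x z).some.exists_mem_reachAvoid_diff_singleton
    (K := B₁ ∪ B₂) (Or.inr hz)
  rcases hy with hy1 | hy2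
  · refine ⟨y, hy1, hreach.mono fun v hv => ⟨Or.inr hv, ?_⟩⟩
    rintro rfl
    exact Set.disjoint_left.mp h.2.1 hv hy1
  · refine absurd (hreach.mono fun v hv => ⟨Or.inl hv, ?_⟩) (h.2.2 x hx y hy2)
    rintro rfl
    exact Set.disjoint_left.mp h.2.1 hy2 hv

theorem of_chain_right (hconn : (cayley S).Connected) (hne : B₂.Nonempty)
    (h₁ : Separates S B₁ B₀ B₂) (h₂ : Separates S B₂ B₁ B₃) : Separates S B₂ B₀ B₃ := by
  refine ⟨h₁.disjoint, h₂.2.1, fun x hx y hy hxy => ?_⟩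
  obtain ⟨b, hb, hxb⟩ := h₁.exists_mem_reachAvoid hconn hne hx
  exact h₂.2.2 b hb y hy (hxb.symm.trans hxy)

theorem of_chain_left (h₁ : Separates S B₁ B₀ B₂) (h₂ : Separates S B₂ B₁ B₃)
    (h₂₀₃ : Separates S B₂ B₀ B₃) : Separates S B₁ B₀ B₃ := by
  refine ⟨h₁.1, h₂.disjoint.symm, fun x hx y hy hxy => ?_⟩
  rcases hxy.or_exists_mem_reachAvoid (K' := B₂) with hxy' | ⟨z, hz, hxz⟩
  exacts [h₂₀₃.2.2 x hx y hy hxy', h₁.2.2 x hx z hz hxz]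

end Separates

theorem stmt6_general {G : Type*} [Group G] (S : Finset G)
    (hgen : Subgroup.closure (S : Set G) = ⊤)
    (B₀ B₁ B₂ B₃ : Set G)
    (h2c : ((cayley (S : Set G)).induce B₂).Connected)
    (hsep₁ : Separates (S : Set G) B₁ B₀ B₂)
    (hsep₂ : Separates (S : Set G) B₂ B₁ B₃) :
    Separates (S : Set G) B₁ B₀ B₃ ∧ Separates (S : Set G) B₂ B₀ B₃ := by
  have hne : B₂.Nonempty := Set.nonempty_coe_sort.mp h2c.nonempty
  have h₂₀₃ := Separates.of_chain_right (cayley_connected_of_closure_eq_top hgen) hne hsep₁ hsep₂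
  exact ⟨Separates.of_chain_left hsep₁ hsep₂ h₂₀₃, h₂₀₃⟩

/-- if `B₁` separates `B₀` from `B₂` and `B₂` separates `B₁` from `B₃`, then both
`B₁` and `B₂` separate `B₀` from `B₃`. -/
theorem stmt6 {G : Type*} [Group G] (S : Finset G)
    (hsym : ∀ s ∈ S, s⁻¹ ∈ S) (hgen : Subgroup.closure (S : Set G) = ⊤)
    (B₀ B₁ B₂ B₃ : Set G)
    (h0f : B₀.Finite) (h1f : B₁.Finite) (h2f : B₂.Finite) (h3f : B₃.Finite)
    (h0c : ((cayley (S : Set G)).induce B₀).Connected)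
    (h1c : ((cayley (S : Set G)).induce B₁).Connected)
    (h2c : ((cayley (S : Set G)).induce B₂).Connected)
    (h3c : ((cayley (S : Set G)).induce B₃).Connected)
    (hsep₁ : Separates (S : Set G) B₁ B₀ B₂)
    (hsep₂ : Separates (S : Set G) B₂ B₁ B₃) :
    Separates (S : Set G) B₁ B₀ B₃ ∧ Separates (S : Set G) B₂ B₀ B₃ :=
  stmt6_general S hgen B₀ B₁ B₂ B₃ h2c hsep₁ hsep₂
end

section
/- Let G be a finitely presented group with finite symmetric generating set S and let H be a finitely generated group with finite symmetric generating set T, each equipped with its word metric. Then for every n ∈ ℕ, the set {df : f ∈ Lip_n(G,H)} ⊆ (B_H(n,1_H)^S)^G is a subshift of finite type. -/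
/-- The closed ball of radius `n` about `g` in the word metric induced by `S`. -/
def ball {G : Type*} [Group G] (S : Set G) (n : ℕ) (g : G) : Set G :=
  {x : G | (cayley S).dist g x ≤ n}

/-- `f : G → H` is `n`-Lipschitz for the word metrics associated to `S` and `T`. -/
def IsLip {G H : Type*} [Group G] [Group H] (S : Set G) (T : Set H)
    (n : ℕ) (f : G → H) : Prop :=
  ∀ x y : G, (cayley T).dist (f x) (f y) ≤ n * (cayley S).dist x y

/-- The product in `G` of (the letters of) a word over `S`. -/
def wordProd {G : Type*} [Group G] (S : Finset G) (w : List ↥S) : G :=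
  (w.map (fun s => (s : G))).prod

/-- The integral `∫_{g·w} σ` of a configuration `σ : G → (S → H)` along the word `w` based at
`g` : the telescoping product `σ(g)(s₀)·σ(gs₀)(s₁)⋯σ(gs₀⋯s_{k-1})(s_k)`. -/
def sint {G H : Type*} [Group G] [Group H] {S : Finset G}
    (σ : G → ↥S → H) : G → List ↥S → H
  | _, [] => 1
  | g, s :: w => σ g s * sint σ (g * (s : G)) w

/-- An elementary homotopy move between words over `S`: replace a subword `v` of length at
most `K` by a word `v'` of length at most `K` representing the same element of `G`. -/
def ElemMove {G : Type*} [Group G] (S : Finset G) (K : ℕ) (w₁ w₂ : List ↥S) : Prop :=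
  ∃ u v v' x : List ↥S, w₁ = u ++ v ++ x ∧ w₂ = u ++ v' ++ x ∧
    v.length ≤ K ∧ v'.length ≤ K ∧ wordProd S v = wordProd S v'

/-- `G` is presented over the (symmetric) generating set `S` by relators of length at most
`K`: any two words over `S` representing the same element of `G` are connected by a finite
sequence of elementary moves of size at most `K`. -/
def PresentedBy {G : Type*} [Group G] (S : Finset G) (K : ℕ) : Prop :=
  ∀ w w' : List ↥S, wordProd S w = wordProd S w' →
    Relation.ReflTransGen (ElemMove S K) w w'

/-- `X ⊆ A^G` is a subshift of finite type: there is a finite family of forbidden patterns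
`p i : F i → A` (`F i ⊆ G` finite) such that `X` consists exactly of those `σ` for which no
translate `σ·g = (x ↦ σ (g * x))` restricts on `F i` to `p i`. -/
def IsSFT {G A : Type*} [Group G] (X : Set (G → A)) : Prop :=
  ∃ (ι : Type) (_ : Finite ι) (F : ι → Finset G) (p : (i : ι) → (↥(F i) → A)),
    X = {σ : G → A | ∀ (g : G) (i : ι), ∃ x : ↥(F i), σ (g * ↑x) ≠ p i x}

/-!
A configuration `σ` is a derivative `df` exactly when its integrals along words depend only on
the element of `G` the word represents; `f` is then recovered as `g ↦ ∫_{1·w} σ` for any word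
`w` representing `g`. Since any two such words are connected by elementary moves of size at
most `K`, it suffices that the integrals along words of length at most `K` based at each `g`
agree, and this is a condition on the restriction of `σ · g` to the finite set of products of
such words. Every such derivative is automatically `n`-Lipschitz, because its values lie in
`B_H(n, 1)` and the word metric is left invariant, and `B_H(n, 1)` is finite, so the
alphabet is finite.
-/

open Pointwise

section CayleyGraph

variable {G : Type*} [Group G]

lemma cayley_adj_iff {S : Set G} {x y : G} :
    (cayley S).Adj x y ↔ x ≠ y ∧ (x⁻¹ * y ∈ S ∨ y⁻¹ * x ∈ S) := by
  simp [cayley, SimpleGraph.fromRel_adj]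

@[simps]
def cayleyMulLeft (S : Set G) (a : G) : cayley S →g cayley S where
  toFun x := a * x
  map_rel' h := by
    rw [cayley_adj_iff] at h ⊢
    simpa [mul_assoc] using h

lemma cayley_dist_mul_left_le {S : Set G} {x y : G} (h : (cayley S).Reachable x y) (a : G) :
    (cayley S).dist (a * x) (a * y) ≤ (cayley S).dist x y := by
  obtain ⟨p, hp⟩ := h.exists_walk_length_eq_dist
  simpa [hp] using SimpleGraph.dist_le (p.map (cayleyMulLeft S a))

lemma cayley_connected {S : Set G} (hS : Subgroup.closure S = ⊤) : (cayley S).Connected := by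
  have hreach : ∀ g, (cayley S).Reachable 1 g := by
    intro g
    have hg : g ∈ Subgroup.closure S := hS ▸ Subgroup.mem_top g
    induction hg using Subgroup.closure_induction with
    | mem s hs =>
      by_cases h : (1 : G) = s
      · exact h ▸ .refl _
      · exact (cayley_adj_iff.2 ⟨h, .inl (by simpa using hs)⟩).reachable
    | one => rfl
    | mul x y _ _ hx hy => exact hx.trans (by simpa using hy.map (cayleyMulLeft S x))
    | inv x _ hx =>
      have h : (cayley S).Reachable x⁻¹ 1 := by simpa using hx.map (cayleyMulLeft S x⁻¹)
      exact h.symm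
  exact ⟨fun x y => (hreach x).symm.trans (hreach y)⟩

lemma inv_mul_mem_pow_length [DecidableEq G] {S : Finset G} {u v : G}
    (p : (cayley (S : Set G)).Walk u v) : u⁻¹ * v ∈ (S ∪ S⁻¹) ^ p.length := by
  induction p with
  | nil => simp
  | @cons u u' v hadj p ih =>
    rw [SimpleGraph.Walk.length_cons, pow_succ',
      show u⁻¹ * v = u⁻¹ * u' * (u'⁻¹ * v) by group]
    refine Finset.mul_mem_mul ?_ ih
    rcases (cayley_adj_iff.1 hadj).2 with h | h
    · exact Finset.mem_union_left _ h
    · exact Finset.mem_union_right _ (by simpa [Finset.mem_inv] using h)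

lemma ball_finite {T : Finset G} (hT : Subgroup.closure (T : Set G) = ⊤) (n : ℕ) :
    (ball (T : Set G) n 1).Finite := by
  classical
  refine ((insert 1 (T ∪ T⁻¹)) ^ n).finite_toSet.subset fun h hh => ?_
  obtain ⟨p, hp⟩ := (cayley_connected hT).exists_walk_length_eq_dist 1 h
  have hmem := inv_mul_mem_pow_length p
  rw [inv_one, one_mul] at hmem
  exact Finset.pow_subset_pow (Finset.subset_insert _ _) (Finset.mem_insert_self _ _)
    (hp ▸ hh) hmem

end CayleyGraph

lemma SimpleGraph.Reachable.dist_apply_le_mul_dist {V W : Type*} {Γ : SimpleGraph V}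
    {Δ : SimpleGraph W} (hΔ : Δ.Connected) {f : V → W} {n : ℕ}
    (hf : ∀ x y, Γ.Adj x y → Δ.dist (f x) (f y) ≤ n) {x y : V} (hxy : Γ.Reachable x y) :
    Δ.dist (f x) (f y) ≤ n * Γ.dist x y := by
  obtain ⟨p, hp⟩ := hxy.exists_walk_length_eq_dist
  rw [← hp]
  clear hp hxy
  induction p with
  | nil => simp
  | @cons x x' y hadj p ih =>
    calc Δ.dist (f x) (f y) ≤ Δ.dist (f x) (f x') + Δ.dist (f x') (f y) := hΔ.dist_triangle
      _ ≤ n + n * p.length := add_le_add (hf _ _ hadj) ih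
      _ = n * (p.cons hadj).length := by rw [SimpleGraph.Walk.length_cons]; ring

lemma isLip_of_inv_mul_mem_ball {G H : Type*} [Group G] [Group H] {S : Set G} {T : Set H}
    (hS : Subgroup.closure S = ⊤) (hT : Subgroup.closure T = ⊤) {n : ℕ} {f : G → H}
    (hf : ∀ g, ∀ s ∈ S, (f g)⁻¹ * f (g * s) ∈ ball T n 1) : IsLip S T n f := by
  have hstep : ∀ g, ∀ s ∈ S, (cayley T).dist (f g) (f (g * s)) ≤ n := fun g s hs => by
    simpa using (cayley_dist_mul_left_le ((cayley_connected hT).preconnected 1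
      ((f g)⁻¹ * f (g * s))) (f g)).trans (hf g s hs)
  intro x y
  refine ((cayley_connected hS).preconnected x y).dist_apply_le_mul_dist (cayley_connected hT)
    fun x y hxy => ?_
  rcases (cayley_adj_iff.1 hxy).2 with h | h
  · simpa using hstep x _ h
  · simpa [SimpleGraph.dist_comm] using hstep y _ h

section Words

variable {G H : Type*} [Group G] [Group H] {S : Finset G}

@[simp]
lemma wordProd_nil : wordProd S [] = 1 := rfl

@[simp]
lemma wordProd_cons (s : S) (w : List S) : wordProd S (s :: w) = s * wordProd S w := by
  simp [wordProd]

@[simp]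
lemma wordProd_append (a b : List S) : wordProd S (a ++ b) = wordProd S a * wordProd S b := by
  simp [wordProd]

lemma exists_wordProd_eq (hSsym : ∀ s ∈ S, s⁻¹ ∈ S)
    (hSgen : Subgroup.closure (S : Set G) = ⊤) (g : G) : ∃ w : List S, wordProd S w = g := by
  have hg : g ∈ Submonoid.closure (S : Set G) := by
    have hinv : (S : Set G)⁻¹ ⊆ S := fun s hs => by simpa using hSsym _ hs
    rw [← Set.union_eq_left.2 hinv, ← Subgroup.closure_toSubmonoid, hSgen]
    trivial
  induction hg using Submonoid.closure_induction with
  | mem s hs => exact ⟨[⟨s, hs⟩], by simp⟩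
  | one => exact ⟨[], rfl⟩
  | mul x y _ _ hx hy =>
    obtain ⟨w, rfl⟩ := hx
    obtain ⟨w', rfl⟩ := hy
    exact ⟨w ++ w', wordProd_append w w'⟩

@[simp]
lemma sint_nil (σ : G → S → H) (g : G) : sint σ g [] = 1 := rfl

@[simp]
lemma sint_cons (σ : G → S → H) (g : G) (s : S) (w : List S) :
    sint σ g (s :: w) = σ g s * sint σ (g * s) w := rfl

lemma sint_append (σ : G → S → H) (g : G) (a b : List S) :
    sint σ g (a ++ b) = sint σ g a * sint σ (g * wordProd S a) b := by
  induction a generalizing g with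
  | nil => simp
  | cons s a ih => simp [ih, mul_assoc]

lemma sint_congr {σ τ : G → S → H} {g h : G} {v : List S}
    (hστ : ∀ u, u <+: v → σ (g * wordProd S u) = τ (h * wordProd S u)) :
    sint σ g v = sint τ h v := by
  induction v generalizing g h with
  | nil => rfl
  | cons s v ih =>
    have h₀ : σ g = τ h := by simpa using hστ [] List.nil_prefix
    rw [sint_cons, sint_cons, h₀, ih (g := g * s) (h := h * s) fun u hu => by
      simpa [mul_assoc] using hστ (s :: u) ((List.prefix_cons_inj s).2 hu)]

lemma sint_eq_of_forall_eq {σ : G → S → H} {f : G → H}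
    (hf : ∀ g s, σ g s = (f g)⁻¹ * f (g * s)) (g : G) (w : List S) :
    sint σ g w = (f g)⁻¹ * f (g * wordProd S w) := by
  induction w generalizing g with
  | nil => simp
  | cons s w ih => simp [hf, ih, mul_assoc]

end Words

section PathIndependence

variable {G H : Type*} [Group G] [Group H] {S : Finset G} {K : ℕ}

def PathIndependentAt (K : ℕ) (σ : G → S → H) (g : G) : Prop :=
  ∀ v v' : List S, v.length ≤ K → v'.length ≤ K → wordProd S v = wordProd S v' →
    sint σ g v = sint σ g v'

lemma sint_eq_of_elemMove {σ : G → S → H} (hσ : ∀ g, PathIndependentAt K σ g) (g : G)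
    {w w' : List S} (h : ElemMove S K w w') : sint σ g w = sint σ g w' := by
  obtain ⟨u, v, v', x, rfl, rfl, hv, hv', hvv'⟩ := h
  simp only [sint_append, wordProd_append, hσ _ v v' hv hv' hvv', hvv']

lemma sint_eq_of_wordProd_eq (hK : PresentedBy S K) {σ : G → S → H}
    (hσ : ∀ g, PathIndependentAt K σ g) (g : G) {w w' : List S}
    (h : wordProd S w = wordProd S w') : sint σ g w = sint σ g w' := by
  have hmoves := hK w w' h
  clear h
  induction hmoves with
  | refl => rfl
  | tail _ hmove ih => exact ih.trans (sint_eq_of_elemMove hσ g hmove)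

theorem exists_forall_eq_inv_mul_iff (hSsym : ∀ s ∈ S, s⁻¹ ∈ S)
    (hSgen : Subgroup.closure (S : Set G) = ⊤) (hK : PresentedBy S K) (σ : G → S → H) :
    (∃ f : G → H, ∀ g s, σ g s = (f g)⁻¹ * f (g * s)) ↔
      ∀ g, PathIndependentAt K σ g := by
  constructor
  · rintro ⟨f, hf⟩ g v v' - - h
    rw [sint_eq_of_forall_eq hf, sint_eq_of_forall_eq hf, h]
  · intro hσ
    choose w hw using exists_wordProd_eq hSsym hSgen
    refine ⟨fun g => sint σ 1 (w g), fun g s => ?_⟩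
    have hws : wordProd S (w (g * s)) = wordProd S (w g ++ [s]) := by simp [hw]
    dsimp only
    rw [sint_eq_of_wordProd_eq hK hσ 1 hws, sint_append]
    simp [hw]

noncomputable def shortWordProds (S : Finset G) (K : ℕ) : Finset G :=
  ((List.finite_length_le S K).image (wordProd S)).toFinset

lemma wordProd_mem_shortWordProds {w : List S} (hw : w.length ≤ K) :
    wordProd S w ∈ shortWordProds S K := by
  simpa [shortWordProds] using ⟨w, hw, rfl⟩

lemma pathIndependentAt_congr {σ τ : G → S → H} {g h : G}
    (hστ : ∀ x ∈ shortWordProds S K, σ (g * x) = τ (h * x)) :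
    PathIndependentAt K σ g ↔ PathIndependentAt K τ h := by
  have hsint : ∀ v : List S, v.length ≤ K → sint σ g v = sint τ h v := fun v hv =>
    sint_congr fun u hu => hστ _ (wordProd_mem_shortWordProds (hu.length_le.trans hv))
  refine forall₄_congr fun v v' hv hv' => ?_
  rw [hsint v hv, hsint v' hv']

lemma pathIndependentAt_iff_exists {σ : G → S → H} {g : G} :
    PathIndependentAt K σ g ↔
      ∃ τ : G → S → H,
        (∀ x : shortWordProds S K, τ x = σ (g * x)) ∧ PathIndependentAt K τ 1 := by
  constructor
  · intro hσ
    exact ⟨fun x => σ (g * x), fun _ => rfl, (pathIndependentAt_congr (by simp)).1 hσ⟩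
  · rintro ⟨τ, hτ, hτ₁⟩
    exact (pathIndependentAt_congr fun x hx => by simp [hτ ⟨x, hx⟩]).2 hτ₁

end PathIndependence

lemma isSFT_setOf_forall {G A : Type*} [Group G] [Finite A] (F : Finset G)
    (P : (F → A) → Prop) : IsSFT {σ : G → A | ∀ g, P fun x => σ (g * x)} := by
  obtain ⟨m, ⟨e⟩⟩ := Finite.exists_equiv_fin {q : F → A // ¬P q}
  refine ⟨Fin m, inferInstance, fun _ => F, fun i => (e.symm i).1, ?_⟩
  ext σ
  refine forall_congr' fun g => ⟨fun h i => ?_, fun h => ?_⟩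
  · by_contra! hc
    exact (e.symm i).2 (funext hc ▸ h)
  · by_contra hP
    obtain ⟨x, hx⟩ := h (e ⟨_, hP⟩)
    simp at hx

theorem stmt9_general {G H : Type*} [Group G] [Group H] (S : Finset G) (T : Finset H)
    (hSsym : ∀ s ∈ S, s⁻¹ ∈ S) (hSgen : Subgroup.closure (S : Set G) = ⊤)
    (hTgen : Subgroup.closure (T : Set H) = ⊤)
    (hfp : ∃ K : ℕ, PresentedBy S K) (n : ℕ) :
    IsSFT {σ : G → (↥S → ↥(ball (T : Set H) n 1)) |
      ∃ f : G → H, IsLip (S : Set G) (T : Set H) n f ∧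
        ∀ (g : G) (s : ↥S), ((σ g s : H)) = (f g)⁻¹ * f (g * ↑s)} := by
  obtain ⟨K, hK⟩ := hfp
  have : Finite (ball (T : Set H) n 1) := (ball_finite hTgen n).to_subtype
  convert isSFT_setOf_forall (A := S → ball (T : Set H) n 1) (shortWordProds S K) fun q =>
    ∃ τ : G → S → H, (∀ x : shortWordProds S K, τ x = fun s => (q x s : H)) ∧
      PathIndependentAt K τ 1 using 1
  ext σ
  have hLip (f : G → H) (hf : ∀ g s, (σ g s : H) = (f g)⁻¹ * f (g * s)) : IsLip S T n f :=
    isLip_of_inv_mul_mem_ball hSgen hTgen fun g s hs => hf g ⟨s, hs⟩ ▸ (σ g ⟨s, hs⟩).2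
  calc _ ↔ ∃ f : G → H, ∀ g s, (σ g s : H) = (f g)⁻¹ * f (g * s) :=
        ⟨fun ⟨f, _, hf⟩ => ⟨f, hf⟩, fun ⟨f, hf⟩ => ⟨f, hLip f hf, hf⟩⟩
    _ ↔ ∀ g, PathIndependentAt K (fun g s => (σ g s : H)) g :=
        exists_forall_eq_inv_mul_iff hSsym hSgen hK _
    _ ↔ _ := forall_congr' fun g => pathIndependentAt_iff_exists

/-- for a finitely presented group `G` and finitely generated group `H`, the set
of derivatives `df` of `n`-Lipschitz functions `f : G → H`, viewed inside
`(B_H(n,1)^S)^G`, is a subshift of finite type.  Here `σ = df` means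
`⟨σ(g),s⟩ = f(g)⁻¹·f(gs)` for all `g, s`. -/
theorem stmt9 {G H : Type*} [Group G] [Group H] (S : Finset G) (T : Finset H)
    (hSsym : ∀ s ∈ S, s⁻¹ ∈ S) (hSgen : Subgroup.closure (S : Set G) = ⊤)
    (hTsym : ∀ t ∈ T, t⁻¹ ∈ T) (hTgen : Subgroup.closure (T : Set H) = ⊤)
    (hfp : ∃ K : ℕ, PresentedBy S K) (n : ℕ) :
    IsSFT {σ : G → (↥S → ↥(ball (T : Set H) n 1)) |
      ∃ f : G → H, IsLip (S : Set G) (T : Set H) n f ∧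
        ∀ (g : G) (s : ↥S), ((σ g s : H)) = (f g)⁻¹ * f (g * ↑s)} :=
  stmt9_general S T hSsym hSgen hTgen hfp n
end
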